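/- Let 𝒱 be the real span of 4×4 quaternionic matrices of the form (a·1, Ã; A, -a·1) with a ∈ ℝ and A ∈ h₂(ℍ). For 𝒜 ∈ 𝒱, 𝒜² = h(𝒜,𝒜)·1 where h(𝒜,𝒜) = g(A,A) + a², and (1/4) Re tr(𝒜ℬ) = h(𝒜,ℬ). -/

import Mathlib

/-! Trace reversal sends `A = (t+x, y; y*, t-x)` to the same matrix with `t` replaced by `-t`,
so `ÃA = AÃ = g(A,A)·1`; squaring `𝒜` blockwise then gives `h(𝒜,𝒜)·1`, the off-diagonal blocks
`aÃ - Ãa` and `aA - Aa` vanishing. The trace formula is the polarization of this relation: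
`𝒜ℬ + ℬ𝒜 = 2h(𝒜,ℬ)·1`, and `Re tr(𝒜ℬ) = Re tr(ℬ𝒜)` because `Re(pq) = Re(qp)` in `ℍ`, so
`Re tr(𝒜ℬ) = ½ Re tr(2h(𝒜,ℬ)·1) = 4h(𝒜,ℬ)`. -/

open Matrix

/-- The 2×2 hermitian quaternionic matrix `(t+x, y; y*, t-x)`. -/
noncomputable def qherm (t x : ℝ) (y : Quaternion ℝ) : Matrix (Fin 2) (Fin 2) (Quaternion ℝ) :=
  !![((t + x : ℝ) : Quaternion ℝ), y; star y, ((t - x : ℝ) : Quaternion ℝ)]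

/-- Trace reversal `Ã = A - (tr A)·1`. -/
noncomputable def qtilde (M : Matrix (Fin 2) (Fin 2) (Quaternion ℝ)) :
    Matrix (Fin 2) (Fin 2) (Quaternion ℝ) :=
  M - (Matrix.trace M) • (1 : Matrix (Fin 2) (Fin 2) (Quaternion ℝ))

/-- An element `(a·1, Ã; A, -a·1)` of the 7-dimensional Minkowski space
`𝒱 ⊆ ℍ[4]`, where `A = (t+x, y; y*, t-x) ∈ h₂(ℍ)`. -/
noncomputable def vmat (a t x : ℝ) (y : Quaternion ℝ) :
    Matrix (Fin 2 ⊕ Fin 2) (Fin 2 ⊕ Fin 2) (Quaternion ℝ) :=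
  Matrix.fromBlocks (a • 1) (qtilde (qherm t x y)) (qherm t x y) (-(a • 1))

open scoped Quaternion

section Blocks

variable {R α l m : Type*} [CommRing R] [Ring α] [Algebra R α]
  [Fintype l] [Fintype m] [DecidableEq l] [DecidableEq m]

theorem fromBlocks_smul_one_neg_mul_self (a c : R) (B : Matrix l m α) (C : Matrix m l α)
    (hBC : B * C = c • 1) (hCB : C * B = c • 1) :
    fromBlocks (a • 1) B C (-(a • 1)) * fromBlocks (a • 1) B C (-(a • 1)) = (a ^ 2 + c) • 1 := by
  rw [fromBlocks_multiply, hBC, hCB, ← fromBlocks_one, fromBlocks_smul]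
  simp only [Matrix.smul_mul, Matrix.mul_smul, Matrix.one_mul, Matrix.mul_one, Matrix.mul_neg,
    Matrix.neg_mul, smul_zero]
  congr 1 <;> module

end Blocks

theorem Quaternion.re_mul_comm {R : Type*} [CommRing R] (p q : ℍ[R]) : (p * q).re = (q * p).re := by
  simp only [Quaternion.re_mul]; ring

theorem Quaternion.re_sum {ι R : Type*} [CommRing R] (s : Finset ι) (f : ι → ℍ[R]) :
    (∑ i ∈ s, f i).re = ∑ i ∈ s, (f i).re := by
  induction s using Finset.cons_induction <;> simp [*]

theorem Matrix.re_trace_mul_comm {m n R : Type*} [Fintype m] [Fintype n] [CommRing R]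
    (M : Matrix m n ℍ[R]) (N : Matrix n m ℍ[R]) : (M * N).trace.re = (N * M).trace.re := by
  simp only [trace, diag, mul_apply, Quaternion.re_sum]
  rw [Finset.sum_comm]
  simp only [Quaternion.re_mul_comm]

theorem Matrix.re_trace_smul_one {n R : Type*} [Fintype n] [DecidableEq n] [CommRing R] (c : R) :
    ((c • 1 : Matrix n n ℍ[R]).trace).re = Fintype.card n * c := by
  simp [trace_smul, mul_comm]

theorem qtilde_add (M N : Matrix (Fin 2) (Fin 2) ℍ[ℝ]) : qtilde (M + N) = qtilde M + qtilde N := by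
  simp only [qtilde, trace_add, add_smul]; abel

theorem qherm_add (t x s u : ℝ) (y z : ℍ[ℝ]) :
    qherm (t + s) (x + u) (y + z) = qherm t x y + qherm s u z := by
  ext i j : 1
  fin_cases i <;> fin_cases j <;> simp [qherm] <;> abel

theorem qtilde_qherm (t x : ℝ) (y : ℍ[ℝ]) : qtilde (qherm t x y) = qherm (-t) x y := by
  ext i j : 1
  fin_cases i <;> fin_cases j <;> simp [qtilde, qherm, trace_fin_two] <;> abel

theorem qherm_mul_qherm_neg (t x : ℝ) (y : ℍ[ℝ]) :
    qherm t x y * qherm (-t) x y = (x ^ 2 - t ^ 2 + Quaternion.normSq y) • 1 := by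
  ext i j : 1
  fin_cases i <;> fin_cases j <;> simp [qherm, mul_apply] <;> ext <;>
    simp [Quaternion.normSq_def'] <;> ring

theorem qherm_neg_mul_qherm (t x : ℝ) (y : ℍ[ℝ]) :
    qherm (-t) x y * qherm t x y = (x ^ 2 - t ^ 2 + Quaternion.normSq y) • 1 := by
  simpa using qherm_mul_qherm_neg (-t) x y

theorem vmat_add (a t x b s u : ℝ) (y z : ℍ[ℝ]) :
    vmat (a + b) (t + s) (x + u) (y + z) = vmat a t x y + vmat b s u z := by
  simp only [vmat, qherm_add, qtilde_add, fromBlocks_add, add_smul, neg_add]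

theorem vmat_mul_self (a t x : ℝ) (y : ℍ[ℝ]) :
    vmat a t x y * vmat a t x y = (a ^ 2 + (x ^ 2 - t ^ 2 + Quaternion.normSq y)) • 1 := by
  rw [vmat, qtilde_qherm]
  exact fromBlocks_smul_one_neg_mul_self _ _ _ _ (qherm_neg_mul_qherm t x y) (qherm_mul_qherm_neg t x y)

theorem vmat_anticommutator (a t x b s u : ℝ) (y z : ℍ[ℝ]) :
    vmat a t x y * vmat b s u z + vmat b s u z * vmat a t x y =
      (2 * (a * b + (-(t * s) + x * u + (y * star z).re))) • 1 := by
  calc vmat a t x y * vmat b s u z + vmat b s u z * vmat a t x y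
      = vmat (a + b) (t + s) (x + u) (y + z) * vmat (a + b) (t + s) (x + u) (y + z)
          - vmat a t x y * vmat a t x y - vmat b s u z * vmat b s u z := by
        rw [vmat_add]; noncomm_ring
    _ = _ := by
        rw [vmat_mul_self, vmat_mul_self, vmat_mul_self, ← sub_smul, ← sub_smul,
          Quaternion.normSq_add]
        congr 1; ring

/-- For `𝒜 ∈ 𝒱`, `𝒜² = h(𝒜,𝒜)·1` with `h(𝒜,𝒜) = g(A,A) + a²`, and
`(1/4) Re tr(𝒜 ℬ) = h(𝒜,ℬ)`, the Minkowski metric of signature (6,1). -/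
theorem vmat_sq_and_quarter_retrace (a t x : ℝ) (y : Quaternion ℝ)
    (b s u : ℝ) (z : Quaternion ℝ) :
    vmat a t x y * vmat a t x y =
      (a ^ 2 + (-(t ^ 2 - x ^ 2 - (y * star y).re))) •
        (1 : Matrix (Fin 2 ⊕ Fin 2) (Fin 2 ⊕ Fin 2) (Quaternion ℝ)) ∧
    (1 / 4) * ((vmat a t x y * vmat b s u z).trace).re =
      a * b + (-(t * s) + x * u + (y * star z).re) := by
  refine ⟨?_, ?_⟩
  · rw [vmat_mul_self, Quaternion.normSq_def]
    congr 1; ring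
  · have h := congrArg (fun M => M.trace.re) (vmat_anticommutator a t x b s u y z)
    simp only [trace_add, Quaternion.re_add, re_trace_mul_comm (vmat b s u z), re_trace_smul_one,
      Fintype.card_sum, Fintype.card_fin, Nat.cast_add, Nat.cast_ofNat] at h
    linarith
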